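/- Let (V, ω) be a finite-dimensional real symplectic vector space and A : V → V a linear involution with ω(Av, Aw) = -ω(v,w). Then there exists an ω-compatible complex structure J on V satisfying A ∘ J = -J ∘ A. -/

import Mathlib

/-!
Since `ω` is anti-invariant under `A`, the `±1`-eigenspaces of the involution `A` are isotropic;
being complementary, they are Lagrangian and `ω` pairs them perfectly. A basis of the
`-1`-eigenspace together with its `ω`-dual basis of the `+1`-eigenspace is a symplectic basis, in
which `ω` has matrix `J`. The complex structure with matrix `-J` in this basis is compatible,
since `ω(·, J ·)` has matrix `J * (-J) = 1`, and it swaps the two eigenspaces, so it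
anticommutes with `A`.
-/

open Module LinearMap

section Involution

variable {K V : Type*} [Field K] [CharZero K] [AddCommGroup V] [Module K V]

theorem isCompl_eigenspace_neg_one_one {A : V →ₗ[K] V} (hA : A ∘ₗ A = LinearMap.id) :
    IsCompl (End.eigenspace A (-1)) (End.eigenspace A 1) := by
  have hAA (v : V) : A (A v) = v := LinearMap.congr_fun hA v
  constructor
  · rw [Submodule.disjoint_def]
    intro v hneg hpos
    have := IsAddTorsionFree.of_isTorsionFree K V
    rw [End.mem_eigenspace_iff] at hneg hpos
    rwa [hpos, neg_one_smul, one_smul, self_eq_neg] at hneg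
  · rw [codisjoint_iff, eq_top_iff]
    intro v _
    have hneg : (2⁻¹ : K) • (v - A v) ∈ End.eigenspace A (-1) := by
      rw [End.mem_eigenspace_iff]; simp only [map_smul, map_sub, hAA]; module
    have hpos : (2⁻¹ : K) • (v + A v) ∈ End.eigenspace A 1 := by
      rw [End.mem_eigenspace_iff]; simp only [map_smul, map_add, hAA]; module
    convert Submodule.add_mem_sup hneg hpos using 1
    module

theorem apply_eq_zero_of_mem_eigenspace {A : V →ₗ[K] V} {ω : V →ₗ[K] V →ₗ[K] K}
    (hanti : ∀ v w, ω (A v) (A w) = -ω v w) {μ : K} (hμ : μ * μ = 1) {v w : V}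
    (hv : v ∈ End.eigenspace A μ) (hw : w ∈ End.eigenspace A μ) : ω v w = 0 := by
  have h := hanti v w
  rw [End.mem_eigenspace_iff.1 hv, End.mem_eigenspace_iff.1 hw, map_smul, map_smul,
    LinearMap.smul_apply, smul_eq_mul, smul_eq_mul, ← mul_assoc, hμ, one_mul, self_eq_neg] at h
  exact h

end Involution

section Lagrangian

variable {K V : Type*} [Field K] [AddCommGroup V] [Module K V] {ω : V →ₗ[K] V →ₗ[K] K}
  {L L' : Submodule K V}

theorem injective_domRestrict₁₂_of_isCompl (hω : ω.SeparatingLeft) (hLL' : IsCompl L L')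
    (hL : ∀ v ∈ L, ∀ w ∈ L, ω v w = 0) : Function.Injective (ω.domRestrict₁₂ L L') := by
  refine ker_eq_bot.1 <| separatingLeft_iff_ker_eq_bot.1 fun v hv ↦ ?_
  ext1
  refine hω v fun w ↦ ?_
  obtain ⟨u, hu, u', hu', rfl⟩ :=
    Submodule.mem_sup.1 (hLL'.sup_eq_top ▸ Submodule.mem_top : w ∈ L ⊔ L')
  rw [map_add, hL v v.2 u hu, zero_add]
  exact hv ⟨u', hu'⟩

theorem isPerfPair_domRestrict₁₂_of_isCompl [FiniteDimensional K V] (hω : ω.IsAlt)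
    (hnd : ω.SeparatingLeft) (hLL' : IsCompl L L') (hL : ∀ v ∈ L, ∀ w ∈ L, ω v w = 0)
    (hL' : ∀ v ∈ L', ∀ w ∈ L', ω v w = 0) : (ω.domRestrict₁₂ L L').IsPerfPair := by
  have hnd' : ω.flip.SeparatingLeft :=
    flip_separatingLeft.2 (hω.isRefl.nondegenerate_iff_separatingLeft.2 hnd).2
  exact .of_injective (injective_domRestrict₁₂_of_isCompl hnd hLL' hL)
    (injective_domRestrict₁₂_of_isCompl hnd' hLL'.symm fun v hv w hw ↦ hL' w hw v hv)

theorem exists_basis_toMatrix₂_eq_J_of_isCompl [FiniteDimensional K V] (hω : ω.IsAlt)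
    (hnd : ω.SeparatingLeft) (hLL' : IsCompl L L') (hL : ∀ v ∈ L, ∀ w ∈ L, ω v w = 0)
    (hL' : ∀ v ∈ L', ∀ w ∈ L', ω v w = 0) :
    ∃ B : Basis (Fin (finrank K L) ⊕ Fin (finrank K L)) K V,
      toMatrix₂ B B ω = Matrix.J (Fin (finrank K L)) K ∧
        (∀ i, B (.inl i) ∈ L) ∧ ∀ i, B (.inr i) ∈ L' := by
  have := isPerfPair_domRestrict₁₂_of_isCompl hω hnd hLL'.symm hL' hL
  let b := finBasis K L
  let b' := b.dualBasis.map (ω.domRestrict₁₂ L' L).toPerfPair.symm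
  have hb'b (i j) : ω (b' i) (b j) = if j = i then 1 else 0 :=
    (LinearMap.congr_fun ((ω.domRestrict₁₂ L' L).apply_symm_toPerfPair_self _) (b j)).trans
      (b.dualBasis_apply_self i j)
  refine ⟨(b.prod b').map (Submodule.prodEquivOfIsCompl L L' hLL'), ?_, by simp, by simp⟩
  ext (i | i) (j | j)
  · simp [toMatrix₂_apply, Matrix.J, hL _ (b i).2 _ (b j).2]
  · simp [toMatrix₂_apply, Matrix.J]
    rw [← hω.neg, hb'b, Matrix.one_apply]
  · simp [toMatrix₂_apply, Matrix.J, hb'b, Matrix.one_apply, eq_comm]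
  · simp [toMatrix₂_apply, Matrix.J, hL' _ (b' i).2 _ (b' j).2]

end Lagrangian

namespace Module.Basis

section CommRing

variable {R V ι : Type*} [CommRing R] [AddCommGroup V] [Module R V] [Fintype ι] [DecidableEq ι]
  (B : Basis (ι ⊕ ι) R V)

noncomputable def stdComplexStructure : V →ₗ[R] V :=
  Matrix.toLin B B (-Matrix.J ι R)

theorem toMatrix_stdComplexStructure :
    LinearMap.toMatrix B B B.stdComplexStructure = -Matrix.J ι R :=
  toMatrix_toLin B B _

theorem stdComplexStructure_comp_self :
    B.stdComplexStructure ∘ₗ B.stdComplexStructure = -LinearMap.id := by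
  apply (LinearMap.toMatrix B B).injective
  rw [LinearMap.toMatrix_comp B B B, toMatrix_stdComplexStructure, map_neg, toMatrix_id,
    neg_mul_neg, Matrix.J_squared]

theorem stdComplexStructure_apply_inl (i : ι) :
    B.stdComplexStructure (B (.inl i)) = -B (.inr i) := by
  simp [stdComplexStructure, Matrix.toLin_self, Matrix.J, Matrix.one_apply]

theorem stdComplexStructure_apply_inr (i : ι) :
    B.stdComplexStructure (B (.inr i)) = B (.inl i) := by
  simp [stdComplexStructure, Matrix.toLin_self, Matrix.J, Matrix.one_apply]

theorem comp_stdComplexStructure_eq_neg_comp {A : V →ₗ[R] V}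
    (hA_inl : ∀ i, A (B (.inl i)) = -B (.inl i)) (hA_inr : ∀ i, A (B (.inr i)) = B (.inr i)) :
    A ∘ₗ B.stdComplexStructure = -(B.stdComplexStructure ∘ₗ A) := by
  refine B.ext fun k ↦ ?_
  rcases k with i | i <;>
    simp [stdComplexStructure_apply_inl, stdComplexStructure_apply_inr, hA_inl, hA_inr]

variable {B} {ω : V →ₗ[R] V →ₗ[R] R} (hω : toMatrix₂ B B ω = Matrix.J ι R)
include hω

theorem compl₁₂_stdComplexStructure :
    ω.compl₁₂ B.stdComplexStructure B.stdComplexStructure = ω := by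
  apply (toMatrix₂ B B).injective
  rw [toMatrix₂_compl₁₂ B B B B, toMatrix_stdComplexStructure, hω, Matrix.transpose_neg,
    Matrix.J_transpose, neg_neg, Matrix.J_squared, neg_one_mul, neg_neg]

theorem compl₂_stdComplexStructure :
    ω.compl₂ B.stdComplexStructure = Matrix.toLinearMap₂ B B 1 := by
  rw [← toMatrix₂_symm, LinearEquiv.eq_symm_apply, toMatrix₂_compl₂ B B B,
    toMatrix_stdComplexStructure, hω, mul_neg, Matrix.J_squared, neg_neg]

end CommRing

theorem apply_stdComplexStructure_pos {V ι : Type*} [AddCommGroup V] [Module ℝ V] [Fintype ι]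
    [DecidableEq ι] {B : Basis (ι ⊕ ι) ℝ V} {ω : V →ₗ[ℝ] V →ₗ[ℝ] ℝ}
    (hω : toMatrix₂ B B ω = Matrix.J ι ℝ) {v : V} (hv : v ≠ 0) :
    0 < ω v (B.stdComplexStructure v) := by
  rw [← compl₂_apply, compl₂_stdComplexStructure hω, Matrix.toLinearMap₂_apply]
  simp only [Matrix.one_apply, smul_eq_mul, mul_ite, mul_one, mul_zero, Finset.sum_ite_eq,
    Finset.mem_univ, if_true]
  obtain ⟨k, hk⟩ := Finsupp.ne_iff.1 ((map_ne_zero_iff _ B.repr.injective).2 hv)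
  exact Finset.sum_pos' (fun i _ ↦ mul_self_nonneg _) ⟨k, Finset.mem_univ k, mul_self_pos.2 hk⟩

end Module.Basis

/-- For any linear anti-symplectic involution `A` of a finite-dimensional
symplectic vector space `(V, ω)` there exists an `ω`-compatible complex
structure `J` anticommuting with `A`. -/
theorem exists_compatible_anticommuting_J
    (V : Type*) [AddCommGroup V] [Module ℝ V] [FiniteDimensional ℝ V]
    (ω : V →ₗ[ℝ] V →ₗ[ℝ] ℝ)
    (halt : ∀ v : V, ω v v = 0)
    (hnd : ∀ v : V, (∀ w : V, ω v w = 0) → v = 0)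
    (A : V →ₗ[ℝ] V) (hA : A ∘ₗ A = LinearMap.id)
    (hanti : ∀ v w : V, ω (A v) (A w) = - ω v w) :
    ∃ J : V →ₗ[ℝ] V,
      J ∘ₗ J = - LinearMap.id ∧
      (∀ v w : V, ω (J v) (J w) = ω v w) ∧
      (∀ v : V, v ≠ 0 → 0 < ω v (J v)) ∧
      A ∘ₗ J = -(J ∘ₗ A) := by
  obtain ⟨B, hBω, hB_neg, hB_pos⟩ :=
    exists_basis_toMatrix₂_eq_J_of_isCompl halt hnd (isCompl_eigenspace_neg_one_one hA)
      (fun v hv w hw ↦ apply_eq_zero_of_mem_eigenspace hanti (by norm_num) hv hw)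
      (fun v hv w hw ↦ apply_eq_zero_of_mem_eigenspace hanti (one_mul 1) hv hw)
  refine ⟨B.stdComplexStructure, B.stdComplexStructure_comp_self,
    fun v w ↦ LinearMap.congr_fun₂ (B.compl₁₂_stdComplexStructure hBω) v w,
    fun v hv ↦ B.apply_stdComplexStructure_pos hBω hv,
    B.comp_stdComplexStructure_eq_neg_comp ?_ ?_⟩
  · intro i
    simpa using End.mem_eigenspace_iff.1 (hB_neg i)
  · intro i
    simpa using End.mem_eigenspace_iff.1 (hB_pos i)
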